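/- arXiv:1707.09290 — 13 statements merged into one kernel-verified Lean document; each statement's English description precedes it below -/
import Mathlib

section
/- Let V be a unital left A-module. Let T_ker denote the kernel of the F-linear map A ⊗_F V → V induced by the module action (x ⊗ v ↦ x • v), and let S_{A⊗V} = { x ⊗ v ∈ A ⊗_F V : x • v = 0 }. Then V is zero action determined if and only if the F-linear span of S_{A⊗V} equals T_ker. -/
/-- A unital left `A`-module `V` (with compatible `F`-vector space structure) is
*zero action determined* (zad) if every `F`-bilinear map `f : A × V → F` vanishing on
pairs with zero action is of the form `f(x, v) = Φ(x • v)` for some linear `Φ`. -/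
def IsZad (F A V : Type*) [Field F] [Ring A] [Algebra F A]
    [AddCommGroup V] [Module F V] [Module A V] [IsScalarTower F A V] : Prop :=
  ∀ f : A →ₗ[F] V →ₗ[F] F,
    (∀ (a : A) (m : V), a • m = 0 → f a m = 0) →
    ∃ Φ : V →ₗ[F] F, ∀ (x : A) (v : V), f x v = Φ (x • v)
open TensorProduct in
/-- The `F`-linear map `A ⊗[F] V → V` induced by the module action, `x ⊗ v ↦ x • v`. -/
noncomputable def actionTensorMap (F A V : Type*) [Field F] [Ring A] [Algebra F A]
    [AddCommGroup V] [Module F V] [Module A V] [IsScalarTower F A V] :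
    A ⊗[F] V →ₗ[F] V :=
  TensorProduct.lift
    { toFun := fun a =>
        { toFun := fun v => a • v
          map_add' := fun v w => smul_add a v w
          map_smul' := fun c v => by simp [smul_comm a c v] }
      map_add' := fun a b => by ext v; exact add_smul a b v
      map_smul' := fun c a => by ext v; simp [smul_assoc c a v] }

open TensorProduct in
lemma actionTensorMap_tmul (F A V : Type*) [Field F] [Ring A] [Algebra F A]
    [AddCommGroup V] [Module F V] [Module A V] [IsScalarTower F A V] (x : A) (v : V) :
    actionTensorMap F A V (x ⊗ₜ[F] v) = x • v := rfl

open TensorProduct in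
/-- `V` is zad iff the span of `S_{A⊗V} = {x ⊗ v : x • v = 0}` equals the
kernel `T_ker` of the action map `A ⊗[F] V → V`. -/
theorem stmt_2 (F A V : Type*) [Field F] [Ring A] [Algebra F A]
    [AddCommGroup V] [Module F V] [Module A V] [IsScalarTower F A V] :
    IsZad F A V ↔
      Submodule.span F {t : A ⊗[F] V | ∃ (x : A) (v : V), x • v = 0 ∧ t = x ⊗ₜ[F] v}
        = LinearMap.ker (actionTensorMap F A V) := by
  set S := Submodule.span F
    {t : A ⊗[F] V | ∃ (x : A) (v : V), x • v = 0 ∧ t = x ⊗ₜ[F] v} with hS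
  have hSK : S ≤ LinearMap.ker (actionTensorMap F A V) := by
    rw [Submodule.span_le]
    rintro t ⟨x, v, hxv, rfl⟩
    simp [LinearMap.mem_ker, actionTensorMap_tmul, hxv]
  constructor
  · intro hzad
    refine le_antisymm hSK ?_
    by_contra h
    obtain ⟨t, htK, htS⟩ := Set.not_subset.mp h
    -- find a functional vanishing on S but not at t
    have hq : S.mkQ t ≠ 0 := by
      simpa [Submodule.mkQ_apply, Submodule.Quotient.mk_eq_zero] using htS
    obtain ⟨φ, hφ⟩ : ∃ φ : Module.Dual F (A ⊗[F] V ⧸ S), φ (S.mkQ t) ≠ 0 := by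
      by_contra h'
      push_neg at h'
      exact hq ((Module.forall_dual_apply_eq_zero_iff F _).mp h')
    set g : A ⊗[F] V →ₗ[F] F := φ.comp S.mkQ with hg
    have hgS : ∀ s ∈ S, g s = 0 := by
      intro s hs
      simp [hg, (Submodule.Quotient.mk_eq_zero S).mpr hs]
    set f : A →ₗ[F] V →ₗ[F] F := (TensorProduct.mk F A V).compr₂ g with hf
    obtain ⟨Φ, hΦ⟩ := hzad f (by
      intro a m ham
      have : (a ⊗ₜ[F] m : A ⊗[F] V) ∈ S :=
        Submodule.subset_span ⟨a, m, ham, rfl⟩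
      simpa [hf] using hgS _ this)
    have key : g = Φ.comp (actionTensorMap F A V) := by
      apply TensorProduct.ext'
      intro x v
      simpa [actionTensorMap_tmul, hf] using hΦ x v
    have : g t = 0 := by
      rw [key]
      simp [LinearMap.mem_ker.mp htK]
    exact hφ (by simpa [hg] using this)
  · intro hSpan f hf
    set g : A ⊗[F] V →ₗ[F] F := TensorProduct.lift f with hg
    have hgS : ∀ s ∈ S, g s = 0 := by
      intro s hs
      refine Submodule.span_induction ?_ (by simp) (by intro a b _ _ ha hb; simp [ha, hb])
        (by intro c a _ ha; simp [ha]) hs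
      rintro t ⟨x, v, hxv, rfl⟩
      simpa [hg] using hf x v hxv
    refine ⟨f 1, fun x v => ?_⟩
    have hmem : (1 : A) ⊗ₜ[F] (x • v) - x ⊗ₜ[F] v ∈ S := by
      rw [hSpan, LinearMap.mem_ker]
      simp [actionTensorMap_tmul]
    have := hgS _ hmem
    rw [map_sub, sub_eq_zero] at this
    simpa [hg] using this.symm
end

section
/- Let V be a unital left A-module. Then V is zero action determined if and only if for every x ∈ A and v ∈ V, the element x ⊗ v − 1 ⊗ (x • v) of A ⊗_F V lies in the F-linear span of the set { a ⊗ m ∈ A ⊗_F V : a • m = 0 }. -/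
open TensorProduct in
/-- `V` is zad iff for all `x ∈ A`, `v ∈ V`, the element
`x ⊗ v - 1 ⊗ (x • v)` lies in the span of `{a ⊗ m : a • m = 0}`. -/
theorem stmt_3 (F A V : Type*) [Field F] [Ring A] [Algebra F A]
    [AddCommGroup V] [Module F V] [Module A V] [IsScalarTower F A V] :
    IsZad F A V ↔
      ∀ (x : A) (v : V),
        x ⊗ₜ[F] v - (1 : A) ⊗ₜ[F] (x • v) ∈
          Submodule.span F {t : A ⊗[F] V | ∃ (a : A) (m : V), a • m = 0 ∧ t = a ⊗ₜ[F] m} := by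
  set S : Submodule F (A ⊗[F] V) :=
    Submodule.span F {t : A ⊗[F] V | ∃ (a : A) (m : V), a • m = 0 ∧ t = a ⊗ₜ[F] m} with hS
  constructor
  · intro hzad x v
    by_contra hmem
    have hne : (Submodule.Quotient.mk (x ⊗ₜ[F] v - (1 : A) ⊗ₜ[F] (x • v)) :
        (A ⊗[F] V) ⧸ S) ≠ 0 := by
      exact fun h0 => hmem ((Submodule.Quotient.mk_eq_zero S).mp h0)
    have hex : ∃ φ : ((A ⊗[F] V) ⧸ S) →ₗ[F] F,
        φ (Submodule.Quotient.mk (x ⊗ₜ[F] v - (1 : A) ⊗ₜ[F] (x • v))) ≠ 0 := by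
      by_contra h
      push_neg at h
      exact hne ((Module.forall_dual_apply_eq_zero_iff F _).mp h)
    obtain ⟨φ, hφ⟩ := hex
    set g : A ⊗[F] V →ₗ[F] F := φ.comp S.mkQ with hg
    have hgS : ∀ t ∈ S, g t = 0 := by
      intro t ht
      simp [hg, (Submodule.Quotient.mk_eq_zero S).mpr ht]
    set f : A →ₗ[F] V →ₗ[F] F := (TensorProduct.mk F A V).compr₂ g with hf
    obtain ⟨Φ, hΦ⟩ := hzad f
      (fun a m ham => hgS _ (Submodule.subset_span ⟨a, m, ham, rfl⟩))
    apply hφ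
    have key : g (x ⊗ₜ[F] v - (1 : A) ⊗ₜ[F] (x • v)) = 0 := by
      rw [map_sub]
      have h1 := hΦ x v
      have h2 := hΦ 1 (x • v)
      simp only [one_smul] at h2
      simp only [hf, LinearMap.compr₂_apply, TensorProduct.mk_apply] at h1 h2
      rw [h1, h2, sub_self]
    simpa [hg] using key
  · intro h f hf
    set g : A ⊗[F] V →ₗ[F] F := TensorProduct.lift f with hg
    refine ⟨g.comp ((TensorProduct.mk F A V) 1), fun x v => ?_⟩
    have hgS : ∀ t ∈ S, g t = 0 := by
      intro t ht
      refine Submodule.span_induction (p := fun t _ => g t = 0) ?_ ?_ ?_ ?_ ht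
      · rintro t ⟨a, m, ham, rfl⟩
        simp [hg, hf a m ham]
      · simp
      · intro a b _ _ ha hb; simp [ha, hb]
      · intro c a _ ha; simp [ha]
    have := hgS _ (h x v)
    rw [map_sub, sub_eq_zero] at this
    simpa [hg] using this
end

section
/- Let V and U be unital left A-modules and let φ : V → U be a surjective homomorphism of A-modules. If V is zero action determined, then U is zero action determined. -/
/-- a homomorphic image of a zad module is zad. -/
theorem stmt_4 (F A V U : Type*) [Field F] [Ring A] [Algebra F A]
    [AddCommGroup V] [Module F V] [Module A V] [IsScalarTower F A V]
    [AddCommGroup U] [Module F U] [Module A U] [IsScalarTower F A U]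
    (φ : V →ₗ[A] U) (hφ : Function.Surjective φ) (hV : IsZad F A V) :
    IsZad F A U := by
  intro f hf
  -- pull back the bilinear map along φ
  set g : A →ₗ[F] V →ₗ[F] F :=
    { toFun := fun a => (f a).comp (φ.restrictScalars F)
      map_add' := by intro a b; ext v; simp
      map_smul' := by intro c a; ext v; simp }
  have hg : ∀ (a : A) (m : V), a • m = 0 → g a m = 0 := by
    intro a m h
    have : a • φ m = 0 := by rw [← map_smul, h, map_zero]
    simpa [g] using hf a (φ m) this
  obtain ⟨Φ, hΦ⟩ := hV g hg
  refine ⟨f 1, fun x u => ?_⟩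
  obtain ⟨v, rfl⟩ := hφ u
  have h1 : f x (φ v) = Φ (x • v) := hΦ x v
  have h2 : f 1 (φ (x • v)) = Φ ((1 : A) • (x • v)) := hΦ 1 (x • v)
  rw [h1, ← map_smul φ, h2, one_smul]
end

section
/- Let V_1, V_2, …, V_n be unital left A-modules. Then all of V_1, …, V_n are zero action determined if and only if their direct sum V_1 ⊕ ⋯ ⊕ V_n is zero action determined. -/
/-- modules `V 1, …, V n` are all zad iff their direct sum is zad. -/
theorem stmt_5 (F A : Type*) [Field F] [Ring A] [Algebra F A]
    (n : ℕ) (V : Fin n → Type*)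
    [∀ i, AddCommGroup (V i)] [∀ i, Module F (V i)] [∀ i, Module A (V i)]
    [∀ i, IsScalarTower F A (V i)] :
    (∀ i, IsZad F A (V i)) ↔ IsZad F A (∀ i, V i) := by
  have hsingle : ∀ (i : Fin n) (a : A) (m : V i),
      a • (Pi.single i m : ∀ j, V j) = Pi.single i (a • m) := by
    intro i a m
    funext j
    by_cases h : j = i
    · subst h; simp
    · simp [Pi.single_eq_of_ne h]
  constructor
  · intro h f hf
    -- get Φ_i for each component
    have key : ∀ i : Fin n, ∃ Φ : V i →ₗ[F] F,
        ∀ (x : A) (v : V i), f x (Pi.single i v) = Φ (x • v) := by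
      intro i
      refine h i ((LinearMap.lcomp F F (LinearMap.single F V i)).comp f) ?_
      intro a m hm
      simp only [LinearMap.comp_apply, LinearMap.lcomp_apply, LinearMap.single_apply]
      apply hf
      rw [hsingle, hm, Pi.single_zero]
    choose Φ hΦ using key
    refine ⟨∑ i, (Φ i).comp (LinearMap.proj i), ?_⟩
    intro x v
    have hv : v = ∑ i, (Pi.single i (v i) : ∀ j, V j) := by
      exact (Finset.univ_sum_single v).symm
    conv_lhs => rw [hv]
    rw [map_sum]
    simp only [LinearMap.sum_apply, LinearMap.comp_apply, LinearMap.proj_apply]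
    refine Finset.sum_congr rfl fun i _ => ?_
    rw [hΦ, Pi.smul_apply]
  · intro h i f hf
    have hvan : ∀ (a : A) (m : ∀ j, V j), a • m = 0 →
        ((((LinearMap.proj i : (∀ j, V j) →ₗ[F] V i).lcomp F F).comp f) a) m = 0 := by
      intro a m hm
      simp only [LinearMap.comp_apply, LinearMap.lcomp_apply, LinearMap.proj_apply]
      exact hf _ _ (by simpa using congrFun hm i)
    obtain ⟨Φ, hΦ⟩ := h (((LinearMap.proj i : (∀ j, V j) →ₗ[F] V i).lcomp F F).comp f) hvan
    refine ⟨Φ.comp (LinearMap.single F V i), ?_⟩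
    intro x v
    have := hΦ x (Pi.single i v)
    simp only [LinearMap.comp_apply, LinearMap.lcomp_apply, LinearMap.proj_apply,
      Pi.single_eq_same] at this ⊢
    rw [this, hsingle]; rfl
end

section
/- Let V and U be unital left A-modules and let φ : V → U be an F-linear map that is zero action preserving, i.e., for all a ∈ A and m ∈ V, a • φ(m) = 0 whenever a • m = 0. If V is zero action determined, then φ is a homomorphism of A-modules (A-linear). -/
/-- a zero action preserving linear map out of a zad module is `A`-linear. -/
theorem stmt_6 (F A V U : Type*) [Field F] [Ring A] [Algebra F A]
    [AddCommGroup V] [Module F V] [Module A V] [IsScalarTower F A V]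
    [AddCommGroup U] [Module F U] [Module A U] [IsScalarTower F A U]
    (φ : V →ₗ[F] U) (hφ : ∀ (a : A) (m : V), a • m = 0 → a • φ m = 0)
    (hV : IsZad F A V) :
    ∀ (a : A) (m : V), φ (a • m) = a • φ m := by
  intro a m
  rw [← sub_eq_zero, ← Module.forall_dual_apply_eq_zero_iff F]
  intro g
  set f : A →ₗ[F] V →ₗ[F] F := LinearMap.mk₂ F (fun x v => g (x • φ v))
    (fun x y v => by simp [add_smul])
    (fun c x v => by simp [smul_assoc])
    (fun x v w => by simp [smul_add])
    (fun c x v => by simp only [map_smul, smul_comm x c]) with hf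
  obtain ⟨Φ, hΦ⟩ := hV f (fun x v h => by simp [hf, hφ x v h])
  have h1 : ∀ v : V, g (φ v) = Φ v := by
    intro v
    have := hΦ 1 v
    simpa [hf] using this
  have h2 := hΦ a m
  simp only [hf, LinearMap.mk₂_apply] at h2
  rw [map_sub, h1, h2, sub_self]
end

section
/- For a unital associative F-algebra A, the following statements are equivalent: (1) A is zero product determined; (2) every unital left A-module V (with compatible F-vector space structure) is zero action determined; (3) the left regular A-module (A acting on itself by left multiplication) is zero action determined. -/
/-- A unital associative `F`-algebra `A` is *zero product determined* (zpd) if every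
`F`-bilinear map `f : A × A → F` vanishing on pairs with zero product is of the form
`f(x, y) = Φ(xy)` for some linear `Φ`. -/
def IsZpd (F A : Type*) [Field F] [Ring A] [Algebra F A] : Prop :=
  ∀ f : A →ₗ[F] A →ₗ[F] F,
    (∀ a b : A, a * b = 0 → f a b = 0) →
    ∃ Φ : A →ₗ[F] F, ∀ x y : A, f x y = Φ (x * y)

universe u

/-- `A` is zero product determined iff every `A`-module is zad, iff the
left regular `A`-module is zad. -/
theorem stmt_7 (F : Type*) (A : Type u) [Field F] [Ring A] [Algebra F A] :
    (IsZpd F A ↔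
      ∀ (V : Type u) [AddCommGroup V] [Module F V] [Module A V] [IsScalarTower F A V],
        IsZad F A V)
    ∧ (IsZpd F A ↔ IsZad F A A) := by
  have h1 : IsZpd F A → ∀ (V : Type u) [AddCommGroup V] [Module F V] [Module A V]
      [IsScalarTower F A V], IsZad F A V := by
    intro hz V _ _ _ _ f hf
    refine ⟨f 1, fun x v => ?_⟩
    let actv : A →ₗ[F] V :=
      { toFun := fun y => y • v
        map_add' := fun a b => add_smul a b v
        map_smul' := fun c y => smul_assoc c y v }
    obtain ⟨Φ, hΦ⟩ := hz (f.compl₂ actv) (fun a b hab => by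
      apply hf
      show a • (b • v) = 0
      rw [smul_smul, hab, zero_smul])
    have e1 : f x v = Φ (x * 1) := by
      have := hΦ x 1; simpa [actv] using this
    have e2 : f 1 (x • v) = Φ (1 * x) := by
      have := hΦ 1 x; simpa [actv] using this
    rw [e1, e2, mul_one, one_mul]
  have h2 : IsZad F A A → IsZpd F A := by
    intro h f hf
    obtain ⟨Φ, hΦ⟩ := h f (fun a b hab => hf a b (by simpa [smul_eq_mul] using hab))
    exact ⟨Φ, fun x y => by simpa [smul_eq_mul] using hΦ x y⟩
  exact ⟨⟨fun h => h1 h, fun h => h2 (h A)⟩, ⟨fun h => h1 h A, h2⟩⟩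
end

section
/- Let V be a unital left A-module and let J be a two-sided ideal of A contained in the annihilator Ann_A(V) = { a ∈ A : a • v = 0 for all v ∈ V }, so that V carries an induced unital A/J-module structure. Then V is zero action determined as an A-module if and only if V is zero action determined as an A/J-module. -/
/-- if `J` is a two-sided ideal of `A` contained in the annihilator of `V`,
then `V` is zad over `A` iff it is zad over `A/J`.  The quotient algebra `A/J` is
represented by a surjective `F`-algebra homomorphism `π : A → B` (so `B ≅ A/J` with
`J = ker π`); the hypothesis `hann` says `J ⊆ Ann_A(V)`, and `hcompat` says the
`B`-module structure on `V` is the one induced from the `A`-module structure. -/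
theorem stmt_8 (F A B V : Type*) [Field F] [Ring A] [Algebra F A] [Ring B] [Algebra F B]
    [AddCommGroup V] [Module F V] [Module A V] [IsScalarTower F A V]
    [Module B V] [IsScalarTower F B V]
    (π : A →ₐ[F] B) (hsurj : Function.Surjective π)
    (hann : ∀ a : A, π a = 0 → ∀ v : V, a • v = 0)
    (hcompat : ∀ (a : A) (v : V), π a • v = a • v) :
    IsZad F A V ↔ IsZad F B V := by
  constructor
  · intro hA g hg
    obtain ⟨Φ, hΦ⟩ := hA (g.comp π.toLinearMap) (fun a m hm => by
      have : π a • m = 0 := by rw [hcompat]; exact hm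
      exact hg (π a) m this)
    refine ⟨Φ, fun b v => ?_⟩
    obtain ⟨a, rfl⟩ := hsurj b
    have := hΦ a v
    simpa [hcompat] using this
  · intro hB f hf
    -- factor f through π
    have hker : LinearMap.ker π.toLinearMap ≤ LinearMap.ker f := by
      intro a ha
      have ha' : π a = 0 := ha
      have : ∀ v : V, f a v = 0 := fun v => hf a v (hann a ha' v)
      exact LinearMap.ext this
    set e := LinearMap.quotKerEquivOfSurjective π.toLinearMap hsurj with he
    have hemk : ∀ a : A, e (Submodule.Quotient.mk a) = π a := fun a => rfl
    set g : B →ₗ[F] V →ₗ[F] F :=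
      ((LinearMap.ker π.toLinearMap).liftQ f hker).comp e.symm.toLinearMap with hgdef
    have hg : ∀ a : A, g (π a) = f a := by
      intro a
      have : e.symm (π a) = Submodule.Quotient.mk a := by
        rw [← hemk a, LinearEquiv.symm_apply_apply]
      simp [hgdef, this]
    obtain ⟨Φ, hΦ⟩ := hB g (fun b m hm => by
      obtain ⟨a, rfl⟩ := hsurj b
      rw [hg a]
      exact hf a m (by rw [← hcompat]; exact hm))
    refine ⟨Φ, fun x v => ?_⟩
    have := hΦ (π x) v
    rw [hg x] at this
    rw [this, hcompat]
end

section
/- Let V be a finite-dimensional (over F) irreducible (simple) unital left A-module. Then V is zero action determined if and only if dim_F V > dim_F End_A(V) or dim_F End_A(V) = 1, where End_A(V) is the F-algebra of A-module endomorphisms of V. -/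
open Module

theorem finrank_le_one_of_forall_exists_eq_comp_mul {F R : Type*} [Field F] [Ring R]
    [Algebra F R] [FiniteDimensional F R]
    (h : ∀ B : R →ₗ[F] R →ₗ[F] F, ∃ Ψ : R →ₗ[F] F, ∀ x y, B x y = Ψ (x * y)) :
    finrank F R ≤ 1 := by
  let T : (R →ₗ[F] F) →ₗ[F] R →ₗ[F] R →ₗ[F] F :=
    LinearMap.lcomp F _ (LinearMap.mul F R) ∘ₗ LinearMap.llcomp F R R F
  have hT : Function.Surjective T := fun B ↦
    let ⟨Ψ, hΨ⟩ := h B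
    ⟨Ψ, by ext x y; exact (hΨ x y).symm⟩
  have := LinearMap.finrank_range_le T
  rw [LinearMap.range_eq_top.2 hT, finrank_top, finrank_linearMap, finrank_linearMap,
    finrank_self] at this
  nlinarith

namespace IsSimpleModule

variable {A V : Type*} [Ring A] [AddCommGroup V] [Module A V] [IsSimpleModule A V]

open scoped Classical

theorem exists_smul_eq_zero_and_smul_eq {x y : V} (hy : y ∉ (End A V) ∙ x) (u : V) :
    ∃ a : A, a • x = 0 ∧ a • y = u := by
  obtain ⟨g, hg, hgy⟩ := LinearMap.exists_extend_of_notMem 0 hy u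
  obtain ⟨a, ha⟩ := jacobson_density g {x, y}
  have hgx : g x = 0 := by
    simpa using LinearMap.congr_fun hg ⟨x, Submodule.mem_span_singleton_self x⟩
  exact ⟨a, by rw [← ha x (by simp), hgx], by rw [← ha y (by simp), hgy]⟩

theorem exists_smul_eq_and_smul_eq {x y : V} (hxy : LinearIndependent (End A V) ![x, y])
    (u₁ u₂ : V) : ∃ a : A, a • x = u₁ ∧ a • y = u₂ := by
  have hy : y ∉ (End A V) ∙ x := by
    simpa [Submodule.mem_span_singleton] using
      (linearIndependent_fin2.1 (LinearIndependent.pair_symm_iff.1 hxy)).2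
  have hx : x ∉ (End A V) ∙ y := by
    simpa [Submodule.mem_span_singleton] using (linearIndependent_fin2.1 hxy).2
  obtain ⟨a₁, ha₁x, ha₁y⟩ := exists_smul_eq_zero_and_smul_eq hy u₂
  obtain ⟨a₂, ha₂y, ha₂x⟩ := exists_smul_eq_zero_and_smul_eq hx u₁
  exact ⟨a₁ + a₂, by rw [add_smul, ha₁x, ha₂x, zero_add], by rw [add_smul, ha₁y, ha₂y, add_zero]⟩

variable {F : Type*} [Field F] [Algebra F A] [Module F V] [IsScalarTower F A V]

theorem injective_applyₗ' {v : V} (hv : v ≠ 0) :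
    Function.Injective (LinearMap.applyₗ' F v : End A V →ₗ[F] V) :=
  fun _ _ h ↦ smul_left_injective (End A V) hv h

theorem surjective_applyₗ'_iff [FiniteDimensional F V] {v : V} (hv : v ≠ 0) :
    Function.Surjective (LinearMap.applyₗ' F v : End A V →ₗ[F] V) ↔
      finrank F V ≤ finrank F (End A V) := by
  refine ⟨fun h ↦ LinearMap.finrank_le_finrank_of_surjective h, fun hle ↦ ?_⟩
  have hinj := injective_applyₗ' (F := F) (A := A) hv
  exact (LinearMap.injective_iff_surjective_of_finrank_eq_finrank
    (le_antisymm (LinearMap.finrank_le_finrank_of_injective hinj) hle)).1 hinj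

end IsSimpleModule

section VanishingOnZeroAction

variable {F A V : Type*} [CommRing F] [Ring A] [Module F A] [AddCommGroup V] [Module F V]
  [Module A V] {f : A →ₗ[F] V →ₗ[F] F}

theorem apply_eq_apply_of_smul_eq (hf : ∀ a m, a • m = 0 → f a m = 0) {a b : A} {v : V}
    (h : a • v = b • v) : f a v = f b v := by
  simpa [sub_eq_zero] using hf (a - b) v (by rw [sub_smul, h, sub_self])

open scoped Classical in
theorem apply_eq_apply_of_linearIndependent [IsSimpleModule A V]
    (hf : ∀ a m, a • m = 0 → f a m = 0) {a b : A} {v w : V}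
    (hvw : LinearIndependent (End A V) ![v, w]) (h : a • v = b • w) : f a v = f b w := by
  obtain ⟨c, hcv, hcw⟩ := IsSimpleModule.exists_smul_eq_and_smul_eq hvw (a • v) (b • w)
  have hc : c • (v - w) = 0 := by rw [smul_sub, hcv, hcw, h, sub_self]
  calc f a v = f c v := apply_eq_apply_of_smul_eq hf hcv.symm
    _ = f c w := by simpa [sub_eq_zero] using hf c _ hc
    _ = f b w := apply_eq_apply_of_smul_eq hf hcw

end VanishingOnZeroAction

section ZeroActionDetermined

variable {F A V : Type*} [Field F] [Ring A] [Algebra F A] [AddCommGroup V] [Module F V]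
  [Module A V] [IsScalarTower F A V] [IsSimpleModule A V]

open scoped Classical

theorem apply_eq_apply_smul_of_finrank_lt [FiniteDimensional F V] {f : A →ₗ[F] V →ₗ[F] F}
    (hf : ∀ a m, a • m = 0 → f a m = 0) (hlt : finrank F (End A V) < finrank F V)
    {a b : A} {v : V} {ρ : End A V} (hv : v ≠ 0) (hρv : ρ • v ≠ 0) (h : a • v = b • ρ • v) :
    f a v = f b (ρ • v) := by
  obtain ⟨z, hz⟩ : ∃ z : V, ∀ l : End A V, l • v ≠ z := by
    simpa [Function.Surjective] using
      mt (IsSimpleModule.surjective_applyₗ'_iff (F := F) hv).1 hlt.not_ge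
  have hvz : LinearIndependent (End A V) ![v, z] := (LinearIndependent.pair_iff' hv).2 hz
  have hρvz : LinearIndependent (End A V) ![ρ • v, z] :=
    (LinearIndependent.pair_iff' hρv).2 fun l ↦ by rw [smul_smul]; exact hz _
  have hz0 : z ≠ 0 := by rintro rfl; exact hz 0 (zero_smul _ v)
  obtain ⟨c, hc⟩ := IsSimpleModule.toSpanSingleton_surjective A hz0 (a • v)
  rw [LinearMap.toSpanSingleton_apply] at hc
  rw [apply_eq_apply_of_linearIndependent hf hvz hc.symm,
    apply_eq_apply_of_linearIndependent hf hρvz (hc.trans h).symm]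

theorem apply_eq_apply_smul_of_finrank_eq_one {f : A →ₗ[F] V →ₗ[F] F}
    (hf : ∀ a m, a • m = 0 → f a m = 0) (h1 : finrank F (End A V) = 1)
    {a b : A} {v : V} {ρ : End A V} (h : a • v = b • ρ • v) : f a v = f b (ρ • v) := by
  obtain ⟨t, rfl⟩ := (finrank_eq_one_iff_of_nonzero' (1 : End A V) one_ne_zero).1 h1 ρ
  rw [smul_one_smul] at h ⊢
  calc f a v = f (t • b) v := apply_eq_apply_of_smul_eq hf (by rw [h, smul_assoc, smul_comm])
    _ = f b (t • v) := by simp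

theorem apply_eq_apply_of_smul_eq_smul [FiniteDimensional F V] {f : A →ₗ[F] V →ₗ[F] F}
    (hf : ∀ a m, a • m = 0 → f a m = 0)
    (hcond : finrank F (End A V) < finrank F V ∨ finrank F (End A V) = 1)
    {a b : A} {v w : V} (hv : v ≠ 0) (hw : w ≠ 0) (h : a • v = b • w) : f a v = f b w := by
  by_cases hvw : LinearIndependent (End A V) ![v, w]
  · exact apply_eq_apply_of_linearIndependent hf hvw h
  obtain ⟨ρ, rfl⟩ : ∃ ρ : End A V, ρ • v = w := by
    simpa [LinearIndependent.pair_iff' hv] using hvw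
  rcases hcond with hlt | h1
  · exact apply_eq_apply_smul_of_finrank_lt hf hlt hv hw h
  · exact apply_eq_apply_smul_of_finrank_eq_one hf h1 h

theorem isZad_of_finrank_lt_or_finrank_eq_one [FiniteDimensional F V]
    (hcond : finrank F (End A V) < finrank F V ∨ finrank F (End A V) = 1) : IsZad F A V := by
  intro f hf
  have := IsSimpleModule.nontrivial A V
  obtain ⟨v, hv⟩ := exists_ne (0 : V)
  obtain ⟨s, hs⟩ :=
    ((LinearMap.toSpanSingleton A V v).restrictScalars F).exists_rightInverse_of_surjective
      (LinearMap.range_eq_top.2 (IsSimpleModule.toSpanSingleton_surjective A hv))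
  refine ⟨f.flip v ∘ₗ s, fun x u ↦ ?_⟩
  rcases eq_or_ne u 0 with rfl | hu
  · simp
  · exact apply_eq_apply_of_smul_eq_smul hf hcond hu hv (LinearMap.congr_fun hs (x • u)).symm

theorem IsZad.finrank_end_le_one [FiniteDimensional F V] (hz : IsZad F A V) {v : V}
    (hv : v ≠ 0) (hsurj : Function.Surjective (LinearMap.applyₗ' F v : End A V →ₗ[F] V)) :
    finrank F (End A V) ≤ 1 := by
  let e : End A V ≃ₗ[F] V := .ofBijective _ ⟨IsSimpleModule.injective_applyₗ' hv, hsurj⟩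
  have he (a : A) (u : V) : e.symm (a • u) = e.symm u * e.symm (a • v) := e.injective <|
    calc e (e.symm (a • u)) = a • e (e.symm u) := by simp only [e.apply_symm_apply]
      _ = e.symm u (a • v) := ((e.symm u).map_smul a v).symm
      _ = e.symm u (e (e.symm (a • v))) := by rw [e.apply_symm_apply]
      _ = e (e.symm u * e.symm (a • v)) := rfl
  refine finrank_le_one_of_forall_exists_eq_comp_mul fun B ↦ ?_
  let orbit : A →ₗ[F] End A V :=
    e.symm.toLinearMap ∘ₗ (LinearMap.toSpanSingleton A V v).restrictScalars F
  -- the bilinear map `(a, u) ↦ B (e⁻¹ u) (e⁻¹ (a • v))`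
  obtain ⟨Φ, hΦ⟩ := hz ((B.compl₂ orbit).flip.compl₂ e.symm.toLinearMap) fun a u hau ↦ by
    have : e.symm u * e.symm (a • v) = 0 := by rw [← he, hau, map_zero]
    rcases mul_eq_zero.1 this with h | h <;> simp [orbit, h]
  refine ⟨Φ ∘ₗ e.toLinearMap, fun x y ↦ ?_⟩
  obtain ⟨a, ha⟩ := IsSimpleModule.toSpanSingleton_surjective A hv (e y)
  rw [LinearMap.toSpanSingleton_apply] at ha
  calc B x y = Φ (a • e x) := by simpa [orbit, ha] using hΦ a (e x)
    _ = Φ (e (x * y)) := by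
      rw [← e.apply_symm_apply (a • e x), he, ha, e.symm_apply_apply, e.symm_apply_apply]

end ZeroActionDetermined

/-- a finite-dimensional irreducible `A`-module `V` is zad iff
`dim V > dim End_A(V)` or `dim End_A(V) = 1`. -/
theorem stmt_9 (F A V : Type*) [Field F] [Ring A] [Algebra F A]
    [AddCommGroup V] [Module F V] [Module A V] [IsScalarTower F A V]
    [FiniteDimensional F V] [IsSimpleModule A V] :
    IsZad F A V ↔
      Module.finrank F V > Module.finrank F (V →ₗ[A] V) ∨
        Module.finrank F (V →ₗ[A] V) = 1 := by
  refine ⟨fun hz ↦ ?_, isZad_of_finrank_lt_or_finrank_eq_one⟩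
  have := IsSimpleModule.nontrivial A V
  obtain ⟨v, hv⟩ := exists_ne (0 : V)
  by_contra! h
  have hle := hz.finrank_end_le_one hv ((IsSimpleModule.surjective_applyₗ'_iff hv).2 h.1)
  have hpos : 0 < finrank F (End A V) := Module.finrank_pos
  exact h.2 (le_antisymm hle hpos)
end

section
/- Let A be a finite-dimensional unital associative F-algebra that is splitting over F, i.e., every finite-dimensional irreducible (simple) A-module S satisfies dim_F End_A(S) = 1. Then every finite-dimensional irreducible A-module is zero action determined. -/
universe u

/-! Every `A`-endomorphism of `V` is a scalar, so Jacobson density lets `A` act on any finite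
set of vectors as an arbitrary `F`-linear operator. For `m ≠ 0` the map `a ↦ a • m` is onto `V`,
so `f(·, m)` factors as `Φ_m (a • m)`. If `v` is not a multiple of `v₀`, density gives `a` with
`a • v₀ = w` and `a • v = 0`, whence `Φ_{v₀ + v} w = f(a, v₀ + v) = f(a, v₀) = Φ_{v₀} w`; thus the
single functional `Φ_{v₀}` represents `f` at every vector. -/

section

variable {F A V : Type*} [CommRing F] [Ring A] [Algebra F A]
  [AddCommGroup V] [Module F V] [Module A V] [IsScalarTower F A V]

theorem exists_linearMap_apply_smul_eq {m : V}
    (hm : Function.Surjective (LinearMap.toSpanSingleton A V m))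
    (ℓ : A →ₗ[F] F) (hℓ : ∀ a : A, a • m = 0 → ℓ a = 0) :
    ∃ g : V →ₗ[F] F, ∀ a : A, g (a • m) = ℓ a := by
  set π := (LinearMap.toSpanSingleton A V m).restrictScalars F
  have hπ : Function.Surjective π := hm
  have hker : LinearMap.ker π ≤ LinearMap.ker ℓ := fun a ha ↦ hℓ a ha
  refine ⟨(LinearMap.ker π).liftQ ℓ hker ∘ₗ (π.quotKerEquivOfSurjective hπ).symm.toLinearMap,
    fun a ↦ ?_⟩
  change (LinearMap.ker π).liftQ ℓ hker ((π.quotKerEquivOfSurjective hπ).symm (π a)) = ℓ a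
  rw [π.quotKerEquivOfSurjective_symm_apply hπ a]
  rfl

end

section

variable {F A V : Type*} [DivisionRing F] [Ring A] [AddCommGroup V] [Module F V] [Module A V]
  [IsSemisimpleModule A V]

theorem exists_smul_eq_of_forall_end_eq_smul
    (hend : ∀ φ : V →ₗ[A] V, ∃ c : F, ∀ x, φ x = c • x) (T : V →ₗ[F] V) (s : Finset V) :
    ∃ a : A, ∀ m ∈ s, T m = a • m := by
  classical
  let T' : Module.End (Module.End A V) V :=
    { toFun := T
      map_add' := T.map_add
      map_smul' := fun φ x ↦ by
        obtain ⟨c, hc⟩ := hend φ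
        simp only [Module.End.smul_def, hc, map_smul, RingHom.id_apply] }
  exact jacobson_density T' s

theorem exists_smul_eq_and_smul_eq_zero
    (hend : ∀ φ : V →ₗ[A] V, ∃ c : F, ∀ x, φ x = c • x) {m n : V}
    (hmn : m ∉ Submodule.span F {n}) (w : V) :
    ∃ a : A, a • m = w ∧ a • n = 0 := by
  classical
  obtain ⟨T, hT0, hTm⟩ := LinearMap.exists_extend_of_notMem 0 hmn w
  obtain ⟨a, ha⟩ := exists_smul_eq_of_forall_end_eq_smul hend T {m, n}
  have hTn : T n = 0 := by
    simpa using congr($hT0 ⟨n, Submodule.mem_span_singleton_self n⟩)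
  exact ⟨a, by rw [← ha m (by simp), hTm], by rw [← ha n (by simp), hTn]⟩

end

section

variable {F A V : Type*} [Field F] [Ring A] [Algebra F A]
  [AddCommGroup V] [Module F V] [Module A V] [IsScalarTower F A V]

theorem IsSimpleModule.isZad_of_forall_end_eq_smul [IsSimpleModule A V]
    (hend : ∀ φ : V →ₗ[A] V, ∃ c : F, ∀ x, φ x = c • x) : IsZad F A V := by
  intro f hf
  have represent (m : V) (hm : m ≠ 0) : ∃ g : V →ₗ[F] F, ∀ a : A, g (a • m) = f a m :=
    exists_linearMap_apply_smul_eq (IsSimpleModule.toSpanSingleton_surjective A hm) (f.flip m)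
      (hf · m)
  have : Nontrivial V := IsSimpleModule.nontrivial A V
  obtain ⟨v₀, hv₀⟩ := exists_ne (0 : V)
  obtain ⟨Φ, hΦ⟩ := represent v₀ hv₀
  refine ⟨Φ, fun x v ↦ ?_⟩
  by_cases hv : v₀ ∈ Submodule.span F {v}
  · obtain ⟨c, hc⟩ := Submodule.mem_span_singleton.mp hv
    have hc₀ : c ≠ 0 := by rintro rfl; simp [← hc] at hv₀
    rw [← inv_smul_smul₀ hc₀ v, hc, map_smul, smul_comm x, map_smul, hΦ]
  · obtain ⟨Ψ, hΨ⟩ := represent (v₀ + v) fun h ↦ hv <| by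
      rw [add_eq_zero_iff_eq_neg.mp h]
      exact Submodule.neg_mem _ (Submodule.mem_span_singleton_self v)
    have hΨΦ : Ψ = Φ := by
      ext w
      obtain ⟨a, rfl, ha⟩ := exists_smul_eq_and_smul_eq_zero hend hv w
      calc Ψ (a • v₀) = Ψ (a • (v₀ + v)) := by rw [smul_add, ha, add_zero]
        _ = f a (v₀ + v) := hΨ a
        _ = Φ (a • v₀) := by rw [map_add, hf a v ha, add_zero, hΦ]
    calc f x v = f x (v₀ + v) - f x v₀ := by rw [map_add]; abel
      _ = Φ (x • v) := by rw [← hΨ, hΨΦ, ← hΦ, smul_add, map_add]; abel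

end

theorem stmt_11_general (F : Type*) (A : Type u) [Field F] [Ring A] [Algebra F A]
    (hsplit : ∀ (S : Type u) [AddCommGroup S] [Module F S] [Module A S] [IsScalarTower F A S],
      IsSimpleModule A S → FiniteDimensional F S → Module.finrank F (S →ₗ[A] S) = 1) :
    ∀ (V : Type u) [AddCommGroup V] [Module F V] [Module A V] [IsScalarTower F A V],
      IsSimpleModule A V → FiniteDimensional F V → IsZad F A V := by
  intro V _ _ _ _ hV hfin
  have : Nontrivial V := IsSimpleModule.nontrivial A V
  refine IsSimpleModule.isZad_of_forall_end_eq_smul fun φ ↦ ?_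
  obtain ⟨c, hc⟩ := (finrank_eq_one_iff_of_nonzero' LinearMap.id one_ne_zero).mp
    (hsplit V hV hfin) φ
  exact ⟨c, fun x ↦ by rw [← hc]; rfl⟩

/-- over a finite-dimensional splitting algebra, every finite-dimensional
irreducible module is zad. -/
theorem stmt_11 (F : Type*) (A : Type u) [Field F] [Ring A] [Algebra F A]
    [FiniteDimensional F A]
    (hsplit : ∀ (S : Type u) [AddCommGroup S] [Module F S] [Module A S] [IsScalarTower F A S],
      IsSimpleModule A S → FiniteDimensional F S → Module.finrank F (S →ₗ[A] S) = 1) :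
    ∀ (V : Type u) [AddCommGroup V] [Module F V] [Module A V] [IsScalarTower F A V],
      IsSimpleModule A V → FiniteDimensional F V → IsZad F A V :=
  stmt_11_general F A hsplit
end

section
/- Let B be a unital associative F-algebra (possibly infinite-dimensional) that is a local ring (it has a unique maximal left ideal; equivalently, the non-units form a two-sided ideal). Let X be a nonzero finite-dimensional (over F) cyclic left B-module (generated by a single element). Then X is zero action determined as a B-module if and only if dim_F X = 1. -/
private lemma zad_nonunits_add {R : Type*} [Ring R] [IsLocalRing R] {a b : R}
    (ha : ¬ IsUnit a) (hb : ¬ IsUnit b) : ¬ IsUnit (a + b) := by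
  rintro ⟨u, hu⟩
  have h1 : (↑u⁻¹ * a) + (↑u⁻¹ * b) = 1 := by
    rw [← mul_add, ← hu, Units.inv_mul]
  rcases IsLocalRing.isUnit_or_isUnit_of_add_one h1 with h | h
  · exact ha (by simpa [← mul_assoc] using (u.isUnit.mul h))
  · exact hb (by simpa [← mul_assoc] using (u.isUnit.mul h))

private lemma zad_smul_comm {F B X : Type*} [Field F] [Ring B] [Algebra F B]
    [AddCommGroup X] [Module F X] [Module B X] [IsScalarTower F B X]
    (c : F) (x : B) (v : X) : x • (c • v) = c • (x • v) := by
  rw [← algebraMap_smul B c v, ← mul_smul, ← Algebra.commutes, mul_smul,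
    algebraMap_smul]

/-- a nonzero finite-dimensional cyclic module over a local algebra is zad
iff it is one-dimensional. -/
theorem stmt_14 (F B X : Type*) [Field F] [Ring B] [Algebra F B] [IsLocalRing B]
    [AddCommGroup X] [Module F X] [Module B X] [IsScalarTower F B X]
    [Nontrivial X] [FiniteDimensional F X]
    (hcyc : ∃ x : X, Submodule.span B {x} = ⊤) :
    IsZad F B X ↔ Module.finrank F X = 1 := by
  constructor
  · -- zad → finrank = 1
    intro hzad
    by_contra hne
    obtain ⟨x₀, hx₀⟩ := hcyc
    have hx0 : x₀ ≠ 0 := by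
      rintro rfl
      obtain ⟨v, hv⟩ := exists_ne (0 : X)
      apply hv
      have : v ∈ Submodule.span B ({0} : Set X) := hx₀ ▸ Submodule.mem_top
      simpa using this
    have hFspan : Submodule.span F ({x₀} : Set X) ≠ ⊤ := fun h => hne (by
      rw [← finrank_span_singleton (K := F) hx0, h, finrank_top])
    obtain ⟨v₀, hv₀⟩ : ∃ v, v ∉ Submodule.span F ({x₀} : Set X) := by
      by_contra h; push_neg at h
      exact hFspan (eq_top_iff.mpr fun v _ => h v)
    set p := Submodule.span F ({x₀} : Set X) with hp
    have hq : p.mkQ v₀ ≠ 0 := by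
      rw [Submodule.mkQ_apply, ne_eq, Submodule.Quotient.mk_eq_zero]
      exact hv₀
    obtain ⟨φ, hφ⟩ : ∃ φ : Module.Dual F (X ⧸ p), φ (p.mkQ v₀) ≠ 0 := by
      by_contra h; push_neg at h
      exact hq ((Module.forall_dual_apply_eq_zero_iff F _).mp h)
    set η : X →ₗ[F] F := φ ∘ₗ p.mkQ with hη
    have hηx₀ : η x₀ = 0 := by
      have : p.mkQ x₀ = 0 := by
        rw [Submodule.mkQ_apply, Submodule.Quotient.mk_eq_zero]
        exact Submodule.mem_span_singleton_self x₀
      simp [hη, this]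
    have hηv₀ : η v₀ ≠ 0 := hφ
    -- The submodule of nonunits
    set N : Submodule F B :=
      { carrier := {a | ¬ IsUnit a}
        add_mem' := fun ha hb => zad_nonunits_add ha hb
        zero_mem' := not_isUnit_zero
        smul_mem' := by
          intro c a ha h
          rcases eq_or_ne c 0 with rfl | hc
          · rw [zero_smul] at h; exact not_isUnit_zero h
          · apply ha
            have heq : a = c⁻¹ • (c • a) := by
              rw [smul_smul, inv_mul_cancel₀ hc, one_smul]
            rw [heq, Algebra.smul_def]
            exact ((isUnit_iff_ne_zero.mpr (inv_ne_zero hc)).map (algebraMap F B)).mul h }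
      with hN
    have h1N : N.mkQ 1 ≠ 0 := by
      rw [Submodule.mkQ_apply, ne_eq, Submodule.Quotient.mk_eq_zero]
      exact fun h => h isUnit_one
    obtain ⟨ψ, hψ⟩ : ∃ ψ : Module.Dual F (B ⧸ N), ψ (N.mkQ 1) ≠ 0 := by
      by_contra h; push_neg at h
      exact h1N ((Module.forall_dual_apply_eq_zero_iff F _).mp h)
    set ξ : B →ₗ[F] F := (ψ (N.mkQ 1))⁻¹ • (ψ ∘ₗ N.mkQ) with hξ
    have hξ1 : ξ 1 = 1 := by
      simp only [hξ, LinearMap.smul_apply, LinearMap.coe_comp, Function.comp_apply,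
        smul_eq_mul]
      exact inv_mul_cancel₀ hψ
    have hξ0 : ∀ a : B, ¬ IsUnit a → ξ a = 0 := by
      intro a ha
      have : N.mkQ a = 0 := by
        rw [Submodule.mkQ_apply, Submodule.Quotient.mk_eq_zero]
        exact ha
      simp [hξ, this]
    set f : B →ₗ[F] X →ₗ[F] F := ξ.smulRight η with hfdef
    have hfapp : ∀ (a : B) (v : X), f a v = ξ a * η v := fun a v => rfl
    have hvanish : ∀ (a : B) (m : X), a • m = 0 → f a m = 0 := by
      intro a m ham
      by_cases ha : IsUnit a
      · have hm : m = 0 := by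
          obtain ⟨u, rfl⟩ := ha
          have h3 := congrArg (fun z => (↑u⁻¹ : B) • z) ham
          simpa [← mul_smul, Units.inv_mul] using h3
        rw [hfapp, hm, map_zero, mul_zero]
      · rw [hfapp, hξ0 a ha, zero_mul]
    obtain ⟨Φ, hΦ⟩ := hzad f hvanish
    apply hηv₀
    have h1 : η v₀ = Φ v₀ := by
      have h2 := hΦ 1 v₀
      rw [one_smul] at h2
      rw [← h2, hfapp, hξ1, one_mul]
    obtain ⟨a, ha⟩ := Submodule.mem_span_singleton.mp
      (show v₀ ∈ Submodule.span B {x₀} from hx₀ ▸ Submodule.mem_top)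
    rw [h1, ← ha, ← hΦ a x₀, hfapp, hηx₀, mul_zero]
  · -- finrank = 1 → zad
    intro h1 f hf
    obtain ⟨e, he0, hs⟩ := finrank_eq_one_iff'.mp h1
    refine ⟨f 1, fun x v => ?_⟩
    obtain ⟨c, rfl⟩ := hs v
    obtain ⟨c', hc'⟩ := hs (x • e)
    have key : f x e = c' • f 1 e := by
      have hz : (x - c' • (1 : B)) • e = 0 := by
        rw [sub_smul, smul_assoc, one_smul, hc', sub_self]
      have h0 := hf _ _ hz
      rw [map_sub, map_smul] at h0
      simpa [sub_eq_zero] using h0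
    have hx : x • (c • e) = c • c' • e := by rw [zad_smul_comm, hc']
    rw [hx, map_smul, map_smul, map_smul, key, smul_comm]
end

section
/- Let B be a unital associative F-algebra and let e₁, e₂ be idempotents in B with e₁ e₂ = 0 = e₂ e₁. Let I be the two-sided ideal of B generated by all commutators [p, a] = p a − a p with p an idempotent of B and a ∈ B. Then every homomorphism of left B-modules g : Be₁ → Be₂ has image contained in Ie₂ = { x e₂ : x ∈ I }. -/
/-!
A homomorphism `g : Be₁ → Be₂` is right multiplication by `y = g e₁`, and `y` lies in `I`:
it satisfies `e₁ y = y` by linearity and `y e₁ = y e₂ e₁ = 0`, so `y = e₁ y - y e₁` is itself a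
commutator of the idempotent `e₁`. Hence `g x = x y = (x y) e₂` with `x y ∈ I`.
-/

section

variable {R : Type*} [Ring R]

namespace IsIdempotentElem

variable {e : R} (he : IsIdempotentElem e)
include he

theorem mul_eq_self_of_mem_span_singleton {x : R} (hx : x ∈ Ideal.span {e}) : x * e = x := by
  obtain ⟨a, rfl⟩ := Ideal.mem_span_singleton'.mp hx
  rw [mul_assoc, he.eq]

theorem linearMap_span_singleton_apply {M : Type*} [AddCommGroup M] [Module R M]
    (f : Ideal.span {e} →ₗ[R] M) (x : Ideal.span {e}) :
    f x = (x : R) • f ⟨e, Ideal.mem_span_singleton_self e⟩ := by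
  rw [← map_smul]
  congr 1
  exact Subtype.ext (he.mul_eq_self_of_mem_span_singleton x.2).symm

end IsIdempotentElem

variable (R) in
def idempotentCommutatorIdeal : TwoSidedIdeal R :=
  TwoSidedIdeal.span {c : R | ∃ p a : R, IsIdempotentElem p ∧ c = p * a - a * p}

theorem mem_idempotentCommutatorIdeal_of_mul_eq_self_of_mul_eq_zero {p y : R}
    (hp : IsIdempotentElem p) (hpy : p * y = y) (hyp : y * p = 0) :
    y ∈ idempotentCommutatorIdeal R := by
  have hy : y = p * y - y * p := by rw [hpy, hyp, sub_zero]
  rw [hy]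
  exact TwoSidedIdeal.subset_span ⟨p, y, hp, rfl⟩

end

theorem stmt_15_general (B : Type*) [Ring B]
    (e₁ e₂ : B) (h₁ : IsIdempotentElem e₁) (h₂ : IsIdempotentElem e₂)
    (h₂₁ : e₂ * e₁ = 0)
    (g : ↥(Ideal.span {e₁} : Ideal B) →ₗ[B] ↥(Ideal.span {e₂} : Ideal B)) :
    ∀ x, (g x : B) ∈
      {y : B | ∃ i ∈ TwoSidedIdeal.span
        {c : B | ∃ p a : B, IsIdempotentElem p ∧ c = p * a - a * p}, i * e₂ = y} := by
  intro x
  set m : Ideal.span {e₁} := ⟨e₁, Ideal.mem_span_singleton_self e₁⟩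
  have hgx : (g x : B) = x * g m := by
    rw [h₁.linearMap_span_singleton_apply g x]; rfl
  have hgm_left : e₁ * g m = g m :=
    (congrArg Subtype.val (h₁.linearMap_span_singleton_apply g m)).symm
  have hgm_right : (g m : B) * e₁ = 0 := by
    rw [← h₂.mul_eq_self_of_mem_span_singleton (g m).2, mul_assoc, h₂₁, mul_zero]
  have hgm : (g m : B) ∈ idempotentCommutatorIdeal B :=
    mem_idempotentCommutatorIdeal_of_mul_eq_self_of_mul_eq_zero h₁ hgm_left hgm_right
  refine ⟨g x, ?_, h₂.mul_eq_self_of_mem_span_singleton (g x).2⟩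
  rw [hgx]
  exact TwoSidedIdeal.mul_mem_left _ _ _ hgm

/-- if `e₁, e₂` are orthogonal idempotents in `B`, every `B`-module
homomorphism `g : Be₁ → Be₂` has image contained in `Ie₂`, where `I` is the two-sided
ideal generated by all commutators of idempotents with arbitrary elements. -/
theorem stmt_15 (F B : Type*) [Field F] [Ring B] [Algebra F B]
    (e₁ e₂ : B) (h₁ : IsIdempotentElem e₁) (h₂ : IsIdempotentElem e₂)
    (h₁₂ : e₁ * e₂ = 0) (h₂₁ : e₂ * e₁ = 0)
    (g : ↥(Ideal.span {e₁} : Ideal B) →ₗ[B] ↥(Ideal.span {e₂} : Ideal B)) :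
    ∀ x, (g x : B) ∈
      {y : B | ∃ i ∈ TwoSidedIdeal.span
        {c : B | ∃ p a : B, IsIdempotentElem p ∧ c = p * a - a * p}, i * e₂ = y} :=
  stmt_15_general B e₁ e₂ h₁ h₂ h₂₁ g
end

section
/- Let A be a finite-dimensional unital associative F-algebra and let e be a primitive idempotent of A (e² = e ≠ 0 and e cannot be written as f + g with f, g nonzero idempotents satisfying f g = g f = 0). Let I be the two-sided ideal of A generated by all commutators [p, a] with p an idempotent of A and a ∈ A. If the quotient A-module Ae/Ie is nonzero and zero action determined, then dim_F (Ae/Ie) = 1. -/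
/-- Unlike the usual notion, this does not exclude `e = 0`. -/
def IsPrimitiveIdempotentElem {A : Type*} [Ring A] (e : A) : Prop :=
  IsIdempotentElem e ∧ ¬ ∃ f g : A, IsIdempotentElem f ∧ IsIdempotentElem g ∧ f ≠ 0 ∧ g ≠ 0 ∧
    f * g = 0 ∧ g * f = 0 ∧ e = f + g

theorem Module.End.bijective_or_isNilpotent_of_indecomposable {R M : Type*} [Ring R]
    [AddCommGroup M] [Module R M] [IsNoetherian R M] [IsArtinian R M]
    (hM : ∀ K L : Submodule R M, IsCompl K L → K = ⊥ ∨ L = ⊥) (f : Module.End R M) :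
    Function.Bijective f ∨ IsNilpotent f := by
  obtain ⟨n, hcompl, hn⟩ :=
    (f.eventually_isCompl_ker_pow_range_pow.and (Filter.eventually_ge_atTop 1)).exists
  rcases hM _ _ hcompl with hker | hrange
  · obtain ⟨m, rfl⟩ := Nat.exists_eq_add_of_le' hn
    have hinj : Function.Injective (⇑(f ^ m) ∘ ⇑f) := by
      rw [← Module.End.coe_mul, ← pow_succ]
      exact LinearMap.ker_eq_bot.mp hker
    exact Or.inl (IsArtinian.bijective_of_injective_endomorphism f hinj.of_comp)
  · exact Or.inr ⟨n, LinearMap.range_eq_bot.mp hrange⟩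

theorem Submodule.smul_eq_and_smul_eq_zero_of_isCompl {R M : Type*} [Ring R] [AddCommGroup M]
    [Module R M] {K L : Submodule R M} (h : IsCompl K L) {u w x : M} (hu : u ∈ K) (hw : w ∈ L)
    (hx : x ∈ K) {a : R} (ha : a • (u + w) = x) : a • u = x ∧ a • w = 0 := by
  have haw : a • w = x - a • u := by rw [← ha, smul_add, add_sub_cancel_left]
  have haw0 : a • w = 0 :=
    Submodule.disjoint_def.mp h.disjoint _ (haw ▸ K.sub_mem hx (K.smul_mem a hu)) (L.smul_mem a hw)
  exact ⟨(sub_eq_zero.mp (haw0 ▸ haw).symm).symm, haw0⟩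

namespace IsPrimitiveIdempotentElem

variable {A : Type*} [Ring A] {e : A}

theorem eq_bot_or_eq_bot_of_isCompl (he : IsPrimitiveIdempotentElem e)
    (K L : Submodule A (Ideal.span {e})) (h : IsCompl K L) : K = ⊥ ∨ L = ⊥ := by
  obtain ⟨u, w, hu, hw, huw⟩ := Submodule.codisjoint_iff_exists_add_eq.mp h.codisjoint
    ⟨e, Ideal.mem_span_singleton_self e⟩
  have hx (x : Ideal.span {e}) : (x : A) • (u + w) = x := by
    obtain ⟨r, hr⟩ := Ideal.mem_span_singleton'.mp x.2
    rw [huw]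
    ext
    change (x : A) * e = x
    rw [← hr, mul_assoc, he.1.eq]
  have hK (x) (hxK : x ∈ K) := Submodule.smul_eq_and_smul_eq_zero_of_isCompl h hu hw hxK (hx x)
  have hL (x) (hxL : x ∈ L) := Submodule.smul_eq_and_smul_eq_zero_of_isCompl h.symm hw hu hxL
    (add_comm u w ▸ hx x)
  have hu0 : (u : A) = 0 → K = ⊥ := fun h0 => (Submodule.eq_bot_iff K).mpr fun x hxK => by
    rw [← (hK x hxK).1]; ext; simp [h0]
  have hw0 : (w : A) = 0 → L = ⊥ := fun h0 => (Submodule.eq_bot_iff L).mpr fun x hxL => by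
    rw [← (hL x hxL).1]; ext; simp [h0]
  by_contra! hne
  exact he.2 ⟨u, w, congrArg Subtype.val (hK u hu).1, congrArg Subtype.val (hL w hw).1,
    mt hu0 hne.1, mt hw0 hne.2, congrArg Subtype.val (hK u hu).2,
    congrArg Subtype.val (hL w hw).2, congrArg Subtype.val huw.symm⟩

theorem exists_inverse_or_isNilpotent [IsNoetherianRing A] [IsArtinianRing A]
    (he : IsPrimitiveIdempotentElem e) {c : A} (hc : e * c * e = c) :
    (∃ b, b * c = e ∧ c * b = e) ∨ IsNilpotent c := by
  have hce : c * e = c := by rw [← hc, mul_assoc, he.1.eq]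
  have hec : e * c = c := by rw [← hc, ← mul_assoc, ← mul_assoc, he.1.eq]
  have hcM : c ∈ Ideal.span {e} := Ideal.mem_span_singleton'.mpr ⟨c, hce⟩
  set f : Module.End A (Ideal.span {e}) :=
    (LinearMap.toSpanSingleton A _ ⟨c, hcM⟩).comp (Ideal.span {e}).subtype
  have hf (x : Ideal.span {e}) : (f x : A) = x * c := rfl
  rcases f.bijective_or_isNilpotent_of_indecomposable he.eq_bot_or_eq_bot_of_isCompl with
    hbij | ⟨n, hn⟩
  · obtain ⟨b, hb⟩ := hbij.2 ⟨e, Ideal.mem_span_singleton_self e⟩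
    have hbc : (b : A) * c = e := congrArg Subtype.val hb
    have hcb : f ⟨c * b, (Ideal.span {e}).mul_mem_left c b.2⟩ =
        f ⟨e, Ideal.mem_span_singleton_self e⟩ := by
      ext
      rw [hf, hf, mul_assoc, hbc, hce, hec]
    exact Or.inl ⟨b, hbc, congrArg Subtype.val (hbij.1 hcb)⟩
  · have hpow (k : ℕ) (x : Ideal.span {e}) : ((f ^ k) x : A) = x * c ^ k := by
      induction k generalizing x with
      | zero => simp
      | succ k ih => rw [pow_succ, Module.End.mul_apply, ih, hf, pow_succ', mul_assoc]
    have hecn : e * c ^ n = 0 := by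
      rw [← hpow n ⟨e, Ideal.mem_span_singleton_self e⟩, hn]
      rfl
    exact Or.inr ⟨n + 1, by rw [pow_succ', ← mul_zero c, ← hecn, ← mul_assoc, hce]⟩

theorem isLocalRing_of_surjective [IsNoetherianRing A] [IsArtinianRing A]
    (he : IsPrimitiveIdempotentElem e) {B : Type*} [Ring B] [Nontrivial B] (φ : A →+* B)
    (hφ : Function.Surjective φ) (he1 : φ e = 1) : IsLocalRing B := by
  refine IsLocalRing.of_isUnit_or_isUnit_one_sub_self fun x => ?_
  obtain ⟨a, rfl⟩ := hφ x
  have hc : e * (e * a * e) * e = e * a * e := by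
    rw [← mul_assoc, ← mul_assoc, he.1.eq, mul_assoc, he.1.eq]
  have hφa : φ (e * a * e) = φ a := by rw [map_mul, map_mul, he1, one_mul, mul_one]
  rw [← hφa]
  rcases he.exists_inverse_or_isNilpotent hc with ⟨b, hba, hab⟩ | hnil
  · exact Or.inl <| isUnit_iff_exists.mpr
      ⟨φ b, by rw [← map_mul, hab, he1], by rw [← map_mul, hba, he1]⟩
  · exact Or.inr (hnil.map φ).isUnit_one_sub

end IsPrimitiveIdempotentElem

section Quotient

variable {A : Type*} [Ring A] {e : A}

theorem IsIdempotentElem.smul_eq_self_of_commutator_mem (he : IsIdempotentElem e)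
    (I : TwoSidedIdeal A) (hI : ∀ x, e * x - x * e ∈ I)
    (v : ↥(Ideal.span {e}) ⧸ Submodule.comap (Ideal.span {e}).subtype
      (Submodule.map (LinearMap.toSpanSingleton A A e) I.asIdeal)) : e • v = v := by
  obtain ⟨⟨y, hy⟩, rfl⟩ := Submodule.Quotient.mk_surjective _ v
  obtain ⟨r, rfl⟩ := Ideal.mem_span_singleton'.mp hy
  rw [← Submodule.Quotient.mk_smul, Submodule.Quotient.eq]
  refine ⟨e * r - r * e, hI r, ?_⟩
  change (e * r - r * e) * e = e * (r * e) - r * e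
  rw [sub_mul, mul_assoc, mul_assoc, he.eq]

theorem exists_smul_mk_eq {N : Submodule A (Ideal.span {e})} (v : Ideal.span {e} ⧸ N) :
    ∃ x : A, x • Submodule.Quotient.mk (p := N) ⟨e, Ideal.mem_span_singleton_self e⟩ = v := by
  obtain ⟨⟨y, hy⟩, rfl⟩ := Submodule.Quotient.mk_surjective _ v
  obtain ⟨r, rfl⟩ := Ideal.mem_span_singleton'.mp hy
  exact ⟨r, rfl⟩

end Quotient

/-- The maximal ideal of a local algebra that need not be commutative, unlike in
`IsLocalRing.maximalIdeal`. -/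
def IsLocalRing.nonunitsSubmodule (F B : Type*) [Field F] [Ring B] [Algebra F B]
    [IsLocalRing B] : Submodule F B where
  carrier := nonunits B
  add_mem' := IsLocalRing.nonunits_add
  zero_mem' := zero_mem_nonunits.mpr zero_ne_one
  smul_mem' c x hx := by
    rcases eq_or_ne c 0 with rfl | hc
    · rw [zero_smul]
      exact zero_mem_nonunits.mpr zero_ne_one
    · exact fun hu => hx ((isUnit_smul_iff (Units.mk0 c hc) x).mp hu)

section Zad

variable {F A V : Type*} [Field F] [Ring A] [Algebra F A] [AddCommGroup V] [Module F V]
  [Module A V] [IsScalarTower F A V]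

theorem IsPrimitiveIdempotentElem.isLocalRing_range_lsmul [IsNoetherianRing A]
    [IsArtinianRing A] [Nontrivial V] {e : A} (he : IsPrimitiveIdempotentElem e)
    (he_smul : ∀ v : V, e • v = v) :
    IsLocalRing (Algebra.lsmul F F V : A →ₐ[F] Module.End F V).range :=
  he.isLocalRing_of_surjective _ (AlgHom.rangeRestrict_surjective _)
    (Subtype.ext (LinearMap.ext he_smul))

theorem IsZad.smul_eq_smul (hzad : IsZad F A V) (χ : A →ₗ[F] F) (hχ1 : χ 1 = 1)
    (hχ : ∀ (a : A) (m : V), m ≠ 0 → a • m = 0 → χ a = 0) (a : A) (v : V) :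
    a • v = χ a • v := by
  rw [← sub_eq_zero, ← Module.forall_dual_apply_eq_zero_iff F]
  intro η
  obtain ⟨Φ, hΦ⟩ := hzad (χ.smulRight η) fun a m ham => by
    by_cases hm : m = 0
    · simp [hm]
    · simp [hχ a m hm ham]
  have hΦη (w : V) : Φ w = η w := by simpa [hχ1] using (hΦ 1 w).symm
  have hav : χ a * η v = Φ (a • v) := by simpa using hΦ a v
  rw [map_sub, η.map_smul, smul_eq_mul, ← hΦη (a • v), ← hav, sub_self]

theorem IsZad.exists_smul_eq_smul (hzad : IsZad F A V)
    [IsLocalRing (Algebra.lsmul F F V : A →ₐ[F] Module.End F V).range] :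
    ∃ χ : A →ₗ[F] F, ∀ (a : A) (v : V), a • v = χ a • v := by
  set ρ : A →ₐ[F] Module.End F V := Algebra.lsmul F F V
  set N := IsLocalRing.nonunitsSubmodule F ρ.range
  have h1 : N.mkQ 1 ≠ 0 := by
    rw [Submodule.mkQ_apply, Ne, Submodule.Quotient.mk_eq_zero]
    exact fun h => h isUnit_one
  obtain ⟨χ, hχ⟩ := Module.Projective.exists_dual_eq_one F h1
  refine ⟨χ ∘ₗ N.mkQ ∘ₗ ρ.rangeRestrict.toLinearMap,
    hzad.smul_eq_smul _ (by simpa using hχ) fun a m hm ham => ?_⟩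
  have hN : ρ.rangeRestrict a ∈ N := fun hu => by
    have hinj := ((Module.End.isUnit_iff _).mp (hu.map ρ.range.val)).1
    exact hm (hinj (show a • m = a • 0 by rw [ham, smul_zero]))
  simp [(Submodule.Quotient.mk_eq_zero N).mpr hN]

theorem IsZad.finrank_eq_one [Nontrivial V] (hzad : IsZad F A V)
    [IsLocalRing (Algebra.lsmul F F V : A →ₐ[F] Module.End F V).range]
    (v₀ : V) (hcyc : ∀ v : V, ∃ x : A, x • v₀ = v) : Module.finrank F V = 1 := by
  obtain ⟨χ, hχ⟩ := hzad.exists_smul_eq_smul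
  have hv₀ : v₀ ≠ 0 := fun h0 => by
    obtain ⟨v, hv⟩ := exists_ne (0 : V)
    obtain ⟨x, rfl⟩ := hcyc v
    exact hv (by rw [h0, smul_zero])
  refine (finrank_eq_one_iff_of_nonzero' v₀ hv₀).mpr fun w => ?_
  obtain ⟨x, rfl⟩ := hcyc w
  exact ⟨χ x, (hχ x v₀).symm⟩

end Zad

theorem stmt_16_general (F A : Type*) [Field F] [Ring A] [Algebra F A] [FiniteDimensional F A]
    (e : A) (he : IsIdempotentElem e)
    (hprim : ¬ ∃ f g : A, IsIdempotentElem f ∧ IsIdempotentElem g ∧ f ≠ 0 ∧ g ≠ 0 ∧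
      f * g = 0 ∧ g * f = 0 ∧ e = f + g)
    (hnonzero : Nontrivial
      (↥(Ideal.span {e} : Ideal A) ⧸
        (Submodule.comap (Ideal.span {e} : Ideal A).subtype
          (Submodule.map (LinearMap.toSpanSingleton A A e)
            (TwoSidedIdeal.span {c : A | ∃ p a : A, IsIdempotentElem p ∧ c = p * a - a * p}).asIdeal))))
    (hzad : IsZad F A
      (↥(Ideal.span {e} : Ideal A) ⧸
        (Submodule.comap (Ideal.span {e} : Ideal A).subtype
          (Submodule.map (LinearMap.toSpanSingleton A A e)
            (TwoSidedIdeal.span {c : A | ∃ p a : A, IsIdempotentElem p ∧ c = p * a - a * p}).asIdeal)))) :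
    Module.finrank F
      (↥(Ideal.span {e} : Ideal A) ⧸
        (Submodule.comap (Ideal.span {e} : Ideal A).subtype
          (Submodule.map (LinearMap.toSpanSingleton A A e)
            (TwoSidedIdeal.span {c : A | ∃ p a : A, IsIdempotentElem p ∧ c = p * a - a * p}).asIdeal))) = 1 := by
  have : IsArtinianRing A := IsArtinianRing.of_finite F A
  have : IsNoetherianRing A := isNoetherian_of_tower F inferInstance
  have he_smul := he.smul_eq_self_of_commutator_mem _ fun x => TwoSidedIdeal.subset_span
    (s := {c : A | ∃ p a : A, IsIdempotentElem p ∧ c = p * a - a * p}) ⟨e, x, he, rfl⟩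
  have := IsPrimitiveIdempotentElem.isLocalRing_range_lsmul (F := F) ⟨he, hprim⟩ he_smul
  exact hzad.finrank_eq_one _ exists_smul_mk_eq

/-- Claim 1 in the paper: if `e` is a primitive idempotent of a
finite-dimensional algebra `A` and the quotient module `Ae/Ie` is nonzero and zad,
then `dim_F (Ae/Ie) = 1`.  Here `I` is the two-sided ideal generated by all
commutators of idempotents with arbitrary elements, `Ae = span_A {e}`, and `Ie` is the
submodule `{xe : x ∈ I}` of `Ae`. -/
theorem stmt_16 (F A : Type*) [Field F] [Ring A] [Algebra F A] [FiniteDimensional F A]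
    (e : A) (he : IsIdempotentElem e) (hne : e ≠ 0)
    (hprim : ¬ ∃ f g : A, IsIdempotentElem f ∧ IsIdempotentElem g ∧ f ≠ 0 ∧ g ≠ 0 ∧
      f * g = 0 ∧ g * f = 0 ∧ e = f + g)
    (hnonzero : Nontrivial
      (↥(Ideal.span {e} : Ideal A) ⧸
        (Submodule.comap (Ideal.span {e} : Ideal A).subtype
          (Submodule.map (LinearMap.toSpanSingleton A A e)
            (TwoSidedIdeal.span {c : A | ∃ p a : A, IsIdempotentElem p ∧ c = p * a - a * p}).asIdeal))))
    (hzad : IsZad F A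
      (↥(Ideal.span {e} : Ideal A) ⧸
        (Submodule.comap (Ideal.span {e} : Ideal A).subtype
          (Submodule.map (LinearMap.toSpanSingleton A A e)
            (TwoSidedIdeal.span {c : A | ∃ p a : A, IsIdempotentElem p ∧ c = p * a - a * p}).asIdeal)))) :
    Module.finrank F
      (↥(Ideal.span {e} : Ideal A) ⧸
        (Submodule.comap (Ideal.span {e} : Ideal A).subtype
          (Submodule.map (LinearMap.toSpanSingleton A A e)
            (TwoSidedIdeal.span {c : A | ∃ p a : A, IsIdempotentElem p ∧ c = p * a - a * p}).asIdeal))) = 1 :=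
  stmt_16_general F A e he hprim hnonzero hzad
end

section
/- Let A be a semiperfect unital associative F-algebra (the identity 1 can be written as a sum 1 = e₁ + ⋯ + e_n of pairwise orthogonal idempotents with each corner algebra e_i A e_i a local ring) such that A/R is finite-dimensional over F, where R is the Jacobson radical of A. Let E be the unital F-subalgebra of A generated by all idempotent elements of A, and let e be an idempotent of A. Then the left A-module Ae is zero action determined if and only if Ae = Ee. -/
section

variable {F A : Type*} [Field F] [Ring A] [Algebra F A]

variable (F A) in
abbrev idempotentSubalgebra : Subalgebra F A := Algebra.adjoin F {x : A | IsIdempotentElem x}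

variable (F) in
/-- `Ee` in the paper's notation. -/
def idempotentSubalgebraMul (e : A) : Submodule F A :=
  (idempotentSubalgebra F A).toSubmodule.map (LinearMap.mulRight F e)

lemma mul_mem_idempotentSubalgebraMul {a : A} (ha : a ∈ idempotentSubalgebra F A) (e : A) :
    a * e ∈ idempotentSubalgebraMul F e :=
  ⟨a, ha, rfl⟩

namespace IsIdempotentElem

lemma mem_idempotentSubalgebra {p : A} (hp : IsIdempotentElem p) :
    p ∈ idempotentSubalgebra F A :=
  Algebra.subset_adjoin hp

lemma mul_mul_mem_idempotentSubalgebra {p q : A} (hp : IsIdempotentElem p)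
    (hqp : q * p = 0) (x : A) : p * x * q ∈ idempotentSubalgebra F A := by
  have hidem : IsIdempotentElem (p + p * x * q) := by
    have h : (p + p * x * q) * (p + p * x * q)
        = p * p + p * p * x * q + p * x * (q * p) + p * x * (q * p) * x * q := by noncomm_ring
    rw [IsIdempotentElem, h, hqp, hp.eq]
    simp
  simpa using sub_mem (hidem.mem_idempotentSubalgebra (F := F)) hp.mem_idempotentSubalgebra

lemma mul_mul_one_sub_mul_mem_idempotentSubalgebra {g : A} (hg : IsIdempotentElem g) (a b : A) :
    g * a * (1 - g) * b ∈ idempotentSubalgebra F A := by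
  have hsplit : g * a * (1 - g) * b
      = (g * a * (1 - g)) * ((1 - g) * b * g) + g * (a * (1 - g) * b) * (1 - g) := by
    calc _ = g * a * ((1 - g) * (1 - g)) * b * g + g * (a * (1 - g) * b) * (1 - g) := by
          rw [hg.one_sub.eq]; noncomm_ring
      _ = _ := by noncomm_ring
  rw [hsplit]
  exact add_mem
    (mul_mem (hg.mul_mul_mem_idempotentSubalgebra hg.one_sub_mul_self a)
      (hg.one_sub.mul_mul_mem_idempotentSubalgebra hg.mul_one_sub_self b))
    (hg.mul_mul_mem_idempotentSubalgebra hg.one_sub_mul_self _)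

end IsIdempotentElem

lemma apply_mul_eq_apply_smul_of_mem_idempotentSubalgebra {V : Type*} [AddCommGroup V]
    [Module F V] [Module A V] [IsScalarTower F A V] {f : A →ₗ[F] V →ₗ[F] F}
    (hf : ∀ (a : A) (m : V), a • m = 0 → f a m = 0) {p : A}
    (hp : p ∈ idempotentSubalgebra F A) (x : A) (m : V) : f (x * p) m = f x (p • m) := by
  induction hp using Algebra.adjoin_induction generalizing x m with
  | mem q hq =>
    have hq : q * q = q := hq
    have h₁ : f (x * q) (m - q • m) = 0 :=
      hf _ _ (by rw [smul_sub, ← mul_smul, mul_assoc, hq, sub_self])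
    have h₂ : f (x - x * q) (q • m) = 0 :=
      hf _ _ (by rw [sub_smul, ← mul_smul, ← mul_smul, mul_assoc, hq, sub_self])
    rw [map_sub, sub_eq_zero] at h₁
    rw [map_sub, LinearMap.sub_apply, sub_eq_zero] at h₂
    rw [h₁, h₂]
  | algebraMap r =>
    rw [← Algebra.commutes, ← Algebra.smul_def, algebraMap_smul, map_smul, LinearMap.smul_apply,
      map_smul]
  | add p q _ _ ihp ihq =>
    rw [mul_add, map_add, LinearMap.add_apply, ihp, ihq, add_smul, map_add]
  | mul p q _ _ ihp ihq =>
    rw [← mul_assoc, ihq, ihp, mul_smul]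

lemma LinearMap.exists_comp_eq_of_surjective_of_ker_le {R M N P : Type*} [Ring R]
    [AddCommGroup M] [AddCommGroup N] [AddCommGroup P] [Module R M] [Module R N] [Module R P]
    [Module.Projective R N] {S : M →ₗ[R] N} (hS : Function.Surjective S) {T : M →ₗ[R] P}
    (hker : LinearMap.ker S ≤ LinearMap.ker T) : ∃ Φ : N →ₗ[R] P, Φ ∘ₗ S = T := by
  obtain ⟨σ, hσ⟩ := S.exists_rightInverse_of_surjective (LinearMap.range_eq_top.2 hS)
  refine ⟨T ∘ₗ σ, LinearMap.ext fun a => ?_⟩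
  have : σ (S a) - a ∈ LinearMap.ker S := by
    simp [LinearMap.mem_ker, ← LinearMap.comp_apply S σ, hσ]
  simpa [sub_eq_zero] using hker this

theorem isZad_span_singleton_of_le {e : A}
    (h : (Ideal.span {e}).restrictScalars F ≤ idempotentSubalgebraMul F e) :
    IsZad F A (Ideal.span {e}) := by
  intro f hf
  let e' : Ideal.span {e} := ⟨e, Ideal.mem_span_singleton_self e⟩
  let S : A →ₗ[F] Ideal.span {e} := (LinearMap.toSpanSingleton A _ e').restrictScalars F
  have hS : Function.Surjective S := fun v => by
    obtain ⟨a, ha⟩ := Ideal.mem_span_singleton'.1 v.2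
    exact ⟨a, Subtype.ext ha⟩
  obtain ⟨Φ, hΦ⟩ := LinearMap.exists_comp_eq_of_surjective_of_ker_le hS
    (T := f.flip e') fun a ha => hf a e' ha
  refine ⟨Φ, fun x v => ?_⟩
  obtain ⟨p, hp, hpv⟩ := h v.2
  have hv : v = p • e' := Subtype.ext hpv.symm
  rw [hv, ← apply_mul_eq_apply_smul_of_mem_idempotentSubalgebra hf hp, ← mul_smul]
  exact (LinearMap.congr_fun hΦ (x * p)).symm

namespace IsIdempotentElem

variable {g : A} (hg : IsIdempotentElem g)
include hg

def toCorner (x : A) : hg.Corner := ⟨g * x * g, x, rfl⟩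

lemma isUnit_corner_iff (y : hg.Corner) :
    IsUnit y ↔ ∃ b : A, y.1 * (g * b * g) = g ∧ (g * b * g) * y.1 = g := by
  rw [isUnit_iff_exists]
  constructor
  · rintro ⟨⟨_, b, rfl⟩, h₁, h₂⟩
    exact ⟨b, congrArg Subtype.val h₁, congrArg Subtype.val h₂⟩
  · rintro ⟨b, h₁, h₂⟩
    exact ⟨hg.toCorner b, Subtype.ext h₁, Subtype.ext h₂⟩

lemma isLocalRing_corner (hg0 : g ≠ 0)
    (h : ∀ a : A,
      (∃ b : A, (g * a * g) * (g * b * g) = g ∧ (g * b * g) * (g * a * g) = g) ∨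
      (∃ b : A, (g - g * a * g) * (g * b * g) = g ∧ (g * b * g) * (g - g * a * g) = g)) :
    IsLocalRing hg.Corner :=
  have : Nontrivial hg.Corner := ⟨0, 1, fun h0 => hg0 (congrArg Subtype.val h0).symm⟩
  .of_isUnit_or_isUnit_one_sub_self fun ⟨_, a, ha⟩ => by
    subst ha
    exact (h a).imp (hg.isUnit_corner_iff _).2 (hg.isUnit_corner_iff _).2

variable (F) in
def cornerNonunits [IsLocalRing hg.Corner] : Submodule F A where
  carrier := {x | ∃ y : hg.Corner, ¬IsUnit y ∧ y.1 = x}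
  zero_mem' := ⟨0, not_isUnit_zero, rfl⟩
  add_mem' := by
    rintro _ _ ⟨y, hy, rfl⟩ ⟨z, hz, rfl⟩
    exact ⟨y + z, IsLocalRing.nonunits_add hy hz, rfl⟩
  smul_mem' := by
    rintro c _ ⟨⟨_, r, rfl⟩, hy, rfl⟩
    refine ⟨hg.toCorner (c • r), fun hcy => hy ?_, by simp [toCorner]⟩
    obtain ⟨b, h₁, h₂⟩ := (hg.isUnit_corner_iff _).1 hcy
    refine (hg.isUnit_corner_iff _).2 ⟨c • b, ?_, ?_⟩
    · refine Eq.trans ?_ h₁; simp only [toCorner, mul_smul_comm, smul_mul_assoc]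
    · refine Eq.trans ?_ h₂; simp only [toCorner, mul_smul_comm, smul_mul_assoc]

lemma exists_dual_ne_zero_cornerNonunits [IsLocalRing hg.Corner] :
    ∃ ψ : Module.Dual F A, ψ g ≠ 0 ∧ ∀ x ∈ hg.cornerNonunits F, ψ x = 0 := by
  have hg_notMem : g ∉ hg.cornerNonunits F := by
    rintro ⟨y, hy, hyg⟩
    exact hy ((show y = 1 from Subtype.ext hyg) ▸ isUnit_one)
  rw [← Subspace.forall_mem_dualAnnihilator_apply_eq_zero_iff] at hg_notMem
  push Not at hg_notMem
  obtain ⟨ψ, hψ, hψg⟩ := hg_notMem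
  exact ⟨ψ, hψg, (Submodule.mem_dualAnnihilator ψ).1 hψ⟩

lemma exists_mul_one_sub_mul_of_mul_eq_zero {x m : A} (hxm : x * m = 0)
    (hx : IsUnit (hg.toCorner x)) : ∃ y : A, g * m = g * y * (1 - g) * m := by
  obtain ⟨b, -, hb⟩ := (hg.isUnit_corner_iff _).1 hx
  change g * b * g * (g * x * g) = g at hb
  refine ⟨-(b * g * x), ?_⟩
  calc g * m = (g * b * g) * (g * x * g) * m := by rw [hb]
    _ = g * b * (g * g) * (x * m) - g * (b * (g * g) * x) * (1 - g) * m := by noncomm_ring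
    _ = _ := by rw [hxm, hg.eq]; noncomm_ring

end IsIdempotentElem

theorem mul_mul_mem_idempotentSubalgebraMul_of_isZad {e g : A}
    (hzad : IsZad F A (Ideal.span {e})) (hg : IsIdempotentElem g) [IsLocalRing hg.Corner]
    (c : A) : g * c * e ∈ idempotentSubalgebraMul F e := by
  rw [← Subspace.forall_mem_dualAnnihilator_apply_eq_zero_iff]
  intro χ hχ
  rw [Submodule.mem_dualAnnihilator] at hχ
  obtain ⟨ψ, hψg, hψ⟩ := hg.exists_dual_ne_zero_cornerNonunits (F := F)
  let f : A →ₗ[F] Ideal.span {e} →ₗ[F] F := (LinearMap.mul F F).compl₁₂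
    (ψ ∘ₗ LinearMap.mulLeftRight F (g, g))
    (χ ∘ₗ LinearMap.mulLeft F g ∘ₗ (Ideal.span {e}).subtype.restrictScalars F)
  have hf : ∀ (x : A) (m : Ideal.span {e}), x • m = 0 → f x m = 0 := by
    intro x m hxm
    by_cases hx : IsUnit (hg.toCorner x)
    · obtain ⟨y, hy⟩ := hg.exists_mul_one_sub_mul_of_mul_eq_zero (congrArg Subtype.val hxm) hx
      obtain ⟨a, ha⟩ := Ideal.mem_span_singleton'.1 m.2
      have : g * m.1 ∈ idempotentSubalgebraMul F e := by
        rw [hy, ← ha, ← mul_assoc]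
        exact mul_mem_idempotentSubalgebraMul
          (hg.mul_mul_one_sub_mul_mem_idempotentSubalgebra _ _) e
      change ψ (g * x * g) * χ (g * m) = 0
      rw [hχ _ this, mul_zero]
    · change ψ (g * x * g) * χ (g * m) = 0
      rw [hψ (g * x * g) ⟨_, hx, rfl⟩, zero_mul]
  obtain ⟨Φ, hΦ⟩ := hzad f hf
  let e' : Ideal.span {e} := ⟨e, Ideal.mem_span_singleton_self e⟩
  have hge : χ (g * e) = 0 := hχ _ (mul_mem_idempotentSubalgebraMul hg.mem_idempotentSubalgebra e)
  have hf_eq : ψ (g * 1 * g) * χ (g * (c * e)) = ψ (g * c * g) * χ (g * e) := by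
    change f 1 (c • e') = f c e'
    rw [hΦ, hΦ, one_smul]
  rw [mul_one, hg.eq, hge, mul_zero, mul_eq_zero] at hf_eq
  rw [mul_assoc]
  exact hf_eq.resolve_left hψg

theorem span_singleton_le_idempotentSubalgebraMul_of_isZad {e : A}
    (hzad : IsZad F A (Ideal.span {e})) {ι : Type*} [Fintype ι] {es : ι → A}
    (hidem : ∀ i, IsIdempotentElem (es i)) (hsum : ∑ i, es i = 1)
    (hloc : ∀ i, IsLocalRing (hidem i).Corner) :
    (Ideal.span {e}).restrictScalars F ≤ idempotentSubalgebraMul F e := by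
  intro x hx
  obtain ⟨c, rfl⟩ := Ideal.mem_span_singleton'.1 hx
  have hc : c * e = ∑ i, es i * c * e := by
    rw [← Finset.sum_mul, ← Finset.sum_mul, hsum, one_mul]
  rw [hc]
  refine Submodule.sum_mem _ fun i _ => ?_
  have := hloc i
  exact mul_mul_mem_idempotentSubalgebraMul_of_isZad hzad (hidem i) c

end

theorem stmt_19_general (F A : Type*) [Field F] [Ring A] [Algebra F A]
    (hsemiperfect : ∃ (n : ℕ) (es : Fin n → A),
      (∀ i, IsIdempotentElem (es i)) ∧
      (∀ i j, i ≠ j → es i * es j = 0) ∧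
      (∑ i, es i) = 1 ∧
      (∀ i, es i ≠ 0 ∧ ∀ a : A,
        (∃ b : A, (es i * a * es i) * (es i * b * es i) = es i ∧
          (es i * b * es i) * (es i * a * es i) = es i) ∨
        (∃ b : A, (es i - es i * a * es i) * (es i * b * es i) = es i ∧
          (es i * b * es i) * (es i - es i * a * es i) = es i)))
    (e : A) :
    IsZad F A ↥(Ideal.span {e} : Ideal A) ↔
      (↑(Ideal.span {e} : Ideal A) : Set A) =
        {x : A | ∃ a ∈ Algebra.adjoin F {x : A | IsIdempotentElem x}, a * e = x} := by
  obtain ⟨n, es, hidem, -, hsum, hloc⟩ := hsemiperfect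
  have hloc' i : IsLocalRing (hidem i).Corner :=
    (hidem i).isLocalRing_corner (hloc i).1 (hloc i).2
  change _ ↔ _ = (idempotentSubalgebraMul F e : Set A)
  constructor
  · intro hzad
    refine subset_antisymm
      (span_singleton_le_idempotentSubalgebraMul_of_isZad hzad hidem hsum hloc') ?_
    rintro _ ⟨a, -, rfl⟩
    exact Ideal.mem_span_singleton'.2 ⟨a, rfl⟩
  · intro h
    exact isZad_span_singleton_of_le h.le

/-- let `A` be a semiperfect algebra (1 is a sum of pairwise orthogonal
idempotents whose corner algebras `eᵢAeᵢ` are local rings) with `A/R` finite-dimensional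
over `F` (`R` the Jacobson radical), let `E` be the subalgebra generated by all
idempotents and `e` an idempotent.  Then `Ae` is zad iff `Ae = Ee`.
A corner algebra `eᵢAeᵢ` (with unit `eᵢ`) is local iff `eᵢ ≠ 0` and for every element
`x = eᵢaeᵢ` of the corner, `x` or `eᵢ - x` is invertible in the corner. -/
theorem stmt_19 (F A : Type*) [Field F] [Ring A] [Algebra F A]
    (hsemiperfect : ∃ (n : ℕ) (es : Fin n → A),
      (∀ i, IsIdempotentElem (es i)) ∧
      (∀ i j, i ≠ j → es i * es j = 0) ∧
      (∑ i, es i) = 1 ∧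
      (∀ i, es i ≠ 0 ∧ ∀ a : A,
        (∃ b : A, (es i * a * es i) * (es i * b * es i) = es i ∧
          (es i * b * es i) * (es i * a * es i) = es i) ∨
        (∃ b : A, (es i - es i * a * es i) * (es i * b * es i) = es i ∧
          (es i * b * es i) * (es i - es i * a * es i) = es i)))
    (hfin : FiniteDimensional F (A ⧸ (Ideal.jacobson (⊥ : Ideal A))))
    (e : A) (he : IsIdempotentElem e) :
    IsZad F A ↥(Ideal.span {e} : Ideal A) ↔
      (↑(Ideal.span {e} : Ideal A) : Set A) =
        {x : A | ∃ a ∈ Algebra.adjoin F {x : A | IsIdempotentElem x}, a * e = x} :=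
  stmt_19_general F A hsemiperfect e
end
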